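/- arXiv:1302.5248 — 2 statements merged into one kernel-verified Lean document; each statement's English description precedes it below -/
import Mathlib

section
/- Let ξ:[0,π]→ℝ be defined by ξ(0)=0 and ξ'(t) = sin²t/√(1+sin²t). For t₀ ∈ (0,π], if τ₀ = 2·arccos(cos t₀/√2) − π/2, then ξ(t₀) = (1/2)·∫₀^{τ₀} √(sin τ) dτ. -/
open Real intervalIntegral

/-!
Write `τ(t) = 2 arccos (cos t / √2) - π / 2` for the turning angle. Then `sin τ(t) = sin² t`,
`τ(0) = 0` and `τ'(t) = 2 sin t / √(1 + sin² t)`. On `[0, π]`, where `√(sin τ(t)) = sin t`, the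
chain rule makes `t ↦ ½ ∫₀^{τ(t)} √(sin τ) dτ` an antiderivative of `sin² t / √(1 + sin² t)`
vanishing at `0`, so it is `ξ`.
-/

/-- The function ξ, antiderivative of sin²t/√(1+sin²t) vanishing at 0. -/
noncomputable def xi (t : ℝ) : ℝ := ∫ r in (0:ℝ)..t, sin r ^ 2 / Real.sqrt (1 + sin r ^ 2)

noncomputable def turningAngle (t : ℝ) : ℝ := 2 * arccos (cos t / √2) - π / 2

lemma cos_div_sqrt_two_sq (t : ℝ) : (cos t / √2) ^ 2 = cos t ^ 2 / 2 := by
  rw [div_pow, sq_sqrt zero_le_two]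

lemma abs_cos_div_sqrt_two_lt_one (t : ℝ) : |cos t / √2| < 1 := by
  rw [← sq_lt_one_iff_abs_lt_one, cos_div_sqrt_two_sq]
  nlinarith [cos_sq_le_one t]

lemma sin_turningAngle (t : ℝ) : sin (turningAngle t) = sin t ^ 2 := by
  obtain ⟨hlt, hgt⟩ := abs_lt.1 (abs_cos_div_sqrt_two_lt_one t)
  rw [turningAngle, sin_sub_pi_div_two, cos_two_mul, cos_arccos hlt.le hgt.le,
    cos_div_sqrt_two_sq]
  nlinarith [sin_sq_add_cos_sq t]

lemma turningAngle_zero : turningAngle 0 = 0 := by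
  have h : 1 / √2 = cos (π / 4) := by
    rw [cos_pi_div_four, div_eq_div_iff (by positivity) two_ne_zero, one_mul,
      mul_self_sqrt zero_le_two]
  rw [turningAngle, cos_zero, h, arccos_cos (by positivity) (by linarith [pi_pos])]
  ring

lemma hasDerivAt_turningAngle (t : ℝ) :
    HasDerivAt turningAngle (2 * sin t / √(1 + sin t ^ 2)) t := by
  obtain ⟨hlt, hgt⟩ := abs_lt.1 (abs_cos_div_sqrt_two_lt_one t)
  have harccos := (hasDerivAt_arccos hlt.ne' hgt.ne).comp t ((hasDerivAt_cos t).div_const √2)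
  refine ((harccos.const_mul 2).sub_const (π / 2)).congr_deriv ?_
  have hsqrt : √2 * √(1 - (cos t / √2) ^ 2) = √(1 + sin t ^ 2) := by
    rw [← sqrt_mul zero_le_two, cos_div_sqrt_two_sq]
    congr 1
    nlinarith [sin_sq_add_cos_sq t]
  rw [← hsqrt]
  ring

lemma hasDerivAt_half_integral_sqrt_sin_turningAngle {t : ℝ} (ht : 0 ≤ sin t) :
    HasDerivAt (fun s => 1 / 2 * ∫ τ in (0 : ℝ)..turningAngle s, √(sin τ))
      (sin t ^ 2 / √(1 + sin t ^ 2)) t := by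
  have hFTC := (continuous_sin.sqrt.integral_hasStrictDerivAt 0 (turningAngle t)).hasDerivAt
  refine ((hFTC.comp t (hasDerivAt_turningAngle t)).const_mul (1 / 2)).congr_deriv ?_
  rw [sin_turningAngle, sqrt_sq ht]
  field_simp

lemma xi_eq_half_integral_sqrt_sin {t : ℝ} (h₀ : 0 ≤ t) (hπ : t ≤ π) :
    xi t = 1 / 2 * ∫ τ in (0 : ℝ)..turningAngle t, √(sin τ) := by
  have hderiv : ∀ s ∈ Set.uIcc 0 t, HasDerivAt
      (fun s => 1 / 2 * ∫ τ in (0 : ℝ)..turningAngle s, √(sin τ))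
      (sin s ^ 2 / √(1 + sin s ^ 2)) s := by
    intro s hs
    rw [Set.uIcc_of_le h₀] at hs
    exact hasDerivAt_half_integral_sqrt_sin_turningAngle
      (sin_nonneg_of_nonneg_of_le_pi hs.1 (hs.2.trans hπ))
  have hcont : Continuous fun s => sin s ^ 2 / √(1 + sin s ^ 2) :=
    (continuous_sin.pow 2).div (continuous_const.add (continuous_sin.pow 2)).sqrt
      fun s => (sqrt_pos.2 (by positivity)).ne'
  rw [xi, integral_eq_sub_of_hasDerivAt hderiv (hcont.intervalIntegrable 0 t), turningAngle_zero,
    integral_same, mul_zero, sub_zero]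

theorem stmt_0 (t₀ τ₀ : ℝ) (ht₀ : t₀ ∈ Set.Ioc 0 π)
    (hτ₀ : τ₀ = 2 * arccos (cos t₀ / Real.sqrt 2) - π / 2) :
    xi t₀ = (1 / 2) * ∫ τ in (0:ℝ)..τ₀, Real.sqrt (sin τ) := by
  rw [hτ₀]
  exact xi_eq_half_integral_sqrt_sin ht₀.1.le ht₀.2
end

section
/- Let κ : [0,L] → (0,∞) be continuous with ∫₀^L κ(s) ds = π, let τ(s) = ∫₀^s κ(r) dr, and suppose d = ∫₀^L sin(τ(s)) ds where d = (1/2)∫₀^π √(sin τ) dτ. Then (1/4)∫₀^L κ(s)² ds ≥ d. -/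
/-!
Substituting `t = τ(s)`, `dt = κ(s) ds` turns `2d = ∫₀^π √(sin t) dt`
into `∫₀^L √(sin τ) κ ds`.
Pointwise AM-GM gives `√(sin τ) κ ≤ κ²/4 + sin τ`, and integrating yields
`2d ≤ (1/4)∫ κ² + ∫ sin τ = (1/4)∫ κ² + d`.
-/

open Real MeasureTheory intervalIntegral Set

theorem sqrt_mul_le_sq_div_four_add {x : ℝ} (hx : 0 ≤ x) (k : ℝ) :
    √x * k ≤ k ^ 2 / 4 + x := by
  nlinarith [sq_nonneg (k / 2 - √x), sq_sqrt hx]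

theorem integral_sqrt_mul_le_quarter_integral_sq_add {f g : ℝ → ℝ} {a b : ℝ} (hab : a ≤ b)
    (hf : ContinuousOn f (Icc a b)) (hg : ContinuousOn g (Icc a b))
    (hf0 : ∀ x ∈ Icc a b, 0 ≤ f x) :
    ∫ x in a..b, √(f x) * g x ≤ (1 / 4) * (∫ x in a..b, g x ^ 2) + ∫ x in a..b, f x := by
  rw [← uIcc_of_le hab] at hf hg
  have hg2 : IntervalIntegrable (fun x => g x ^ 2 / 4) volume a b :=
    ((hg.pow 2).div_const 4).intervalIntegrable
  calc ∫ x in a..b, √(f x) * g x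
      ≤ ∫ x in a..b, (g x ^ 2 / 4 + f x) :=
        integral_mono_on hab ((hf.sqrt.mul hg).intervalIntegrable)
          (hg2.add hf.intervalIntegrable)
          fun x hx => sqrt_mul_le_sq_div_four_add (hf0 x hx) (g x)
    _ = (1 / 4) * (∫ x in a..b, g x ^ 2) + ∫ x in a..b, f x := by
        rw [integral_add hg2 hf.intervalIntegrable, intervalIntegral.integral_div]
        ring

theorem primitive_mem_Icc {κ : ℝ → ℝ} {a b s : ℝ} (hκ : IntervalIntegrable κ volume a b)
    (hκ0 : ∀ x ∈ Icc a b, 0 ≤ κ x) (hs : s ∈ Icc a b) :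
    ∫ r in a..s, κ r ∈ Icc 0 (∫ r in a..b, κ r) :=
  ⟨integral_nonneg hs.1 fun x hx => hκ0 x ⟨hx.1, hx.2.trans hs.2⟩,
    integral_mono_interval le_rfl hs.1 hs.2
      ((ae_restrict_iff' measurableSet_Ioc).2
        (ae_of_all _ fun x hx => hκ0 x (Ioc_subset_Icc_self hx)))
      hκ⟩

theorem integral_comp_primitive_mul {κ g : ℝ → ℝ} {a b : ℝ} (hab : a ≤ b)
    (hκ : ContinuousOn κ (Icc a b)) (hg : Continuous g) :
    ∫ s in a..b, g (∫ r in a..s, κ r) * κ s = ∫ t in (0:ℝ)..∫ r in a..b, κ r, g t := by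
  rw [← uIcc_of_le hab] at hκ
  have hderiv : ∀ x ∈ Ioo (min a b) (max a b),
      HasDerivWithinAt (fun s => ∫ r in a..s, κ r) (κ x) (Ioi x) x := by
    intro x hx
    rw [min_eq_left hab, max_eq_right hab] at hx
    have hnhds : uIcc a b ∈ nhds x := by
      rw [uIcc_of_le hab]; exact Icc_mem_nhds hx.1 hx.2
    refine (integral_hasDerivAt_right ?_ ?_ (hκ.continuousAt hnhds)).hasDerivWithinAt
    · exact hκ.intervalIntegrable.mono_set (uIcc_subset_uIcc_left (by
        rw [uIcc_of_le hab]; exact ⟨hx.1.le, hx.2.le⟩))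
    · exact hκ.stronglyMeasurableAtFilter_nhdsWithin measurableSet_uIcc x |>.filter_mono
        (le_of_eq (nhdsWithin_eq_nhds.2 hnhds).symm)
  have := integral_comp_mul_deriv'' (g := g)
    (continuousOn_primitive_interval hκ.integrableOn_uIcc) hderiv hκ hg.continuousOn
  simpa only [integral_same, Function.comp_apply] using this

theorem stmt_7 (L : ℝ) (hL : 0 < L) (κ : ℝ → ℝ)
    (hcont : ContinuousOn κ (Set.Icc 0 L))
    (hpos : ∀ s ∈ Set.Icc 0 L, 0 < κ s)
    (hturn : ∫ s in (0:ℝ)..L, κ s = π)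
    (τ : ℝ → ℝ) (hτ : ∀ s, τ s = ∫ r in (0:ℝ)..s, κ r)
    (d : ℝ) (hd : d = (1 / 2) * ∫ τ' in (0:ℝ)..π, Real.sqrt (Real.sin τ'))
    (hheight : d = ∫ s in (0:ℝ)..L, Real.sin (τ s)) :
    (1 / 4) * ∫ s in (0:ℝ)..L, κ s ^ 2 ≥ d := by
  have hτcont : ContinuousOn τ (Icc 0 L) := by
    have := continuousOn_primitive_interval (μ := volume)
      (hcont.integrableOn_Icc.mono_set (uIcc_of_le hL.le).le)
    rwa [uIcc_of_le hL.le, ← funext hτ] at this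
  have hsin : ∀ s ∈ Icc 0 L, 0 ≤ sin (τ s) := fun s hs => by
    have hmem := primitive_mem_Icc (hcont.intervalIntegrable_of_Icc hL.le)
      (fun x hx => (hpos x hx).le) hs
    rw [hturn, ← hτ] at hmem
    exact sin_nonneg_of_nonneg_of_le_pi hmem.1 hmem.2
  have hcov : ∫ s in (0:ℝ)..L, √(sin (τ s)) * κ s = 2 * d := by
    simp only [hτ]
    rw [integral_comp_primitive_mul (g := fun t => √(sin t)) hL.le hcont (by fun_prop),
      hturn, hd]
    ring
  have hamgm : ∫ s in (0:ℝ)..L, √(sin (τ s)) * κ s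
      ≤ (1 / 4) * (∫ s in (0:ℝ)..L, κ s ^ 2) + ∫ s in (0:ℝ)..L, sin (τ s) :=
    integral_sqrt_mul_le_quarter_integral_sq_add hL.le
      (continuous_sin.comp_continuousOn hτcont) hcont hsin
  linarith
end
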